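/- arXiv:2412.04843 — 6 statements merged into one kernel-verified Lean document; each statement's English description precedes it below -/
import Mathlib

section
/- Variant of Farkas' lemma: Given matrices M ∈ ℝ^{m₁×n}, N ∈ ℝ^{m₂×n} and vectors a ∈ ℝ^{m₁}, b ∈ ℝ^{m₂}, exactly one of the following holds: (i) there exists x ∈ ℝ^n with x ≥ 0 (componentwise), Mx ≤ a (componentwise), and Nx ≪ b (strict inequality in every component); or (ii) there exist λ ∈ ℝ^{m₁}, μ ∈ ℝ^{m₂} with λ ≥ 0, μ ≥ 0, λᵀM + μᵀN ≥ 0 (componentwise), λᵀa + μᵀb ≤ 0, and additionally either λᵀa + μᵀb < 0 or μ is not the zero vector (i.e., μ > 0 in the sense that some component is positive). -/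
open Matrix Finset

section FarkasAux

lemma isClosed_cone_of_li {ι : Type*} [Fintype ι] {E : Type*} [NormedAddCommGroup E]
    [InnerProductSpace ℝ E] [FiniteDimensional ℝ E] (v : ι → E)
    (hv : LinearIndependent ℝ v) :
    IsClosed {x : E | ∃ c : ι → ℝ, (∀ j, 0 ≤ c j) ∧ ∑ j, c j • v j = x} := by
  have hker : LinearMap.ker (Fintype.linearCombination ℝ v) = ⊥ := by
    rw [LinearMap.ker_eq_bot']
    intro c hc
    funext j
    exact Fintype.linearIndependent_iff.mp hv c
      (by simpa [Fintype.linearCombination_apply] using hc) j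
  have hemb := LinearMap.isClosedEmbedding_of_injective
    (f := Fintype.linearCombination ℝ v) hker
  have hset : {x : E | ∃ c : ι → ℝ, (∀ j, 0 ≤ c j) ∧ ∑ j, c j • v j = x}
      = (Fintype.linearCombination ℝ v) '' {c | ∀ j, 0 ≤ c j} := by
    ext x
    simp [Set.mem_image, Fintype.linearCombination_apply]
  rw [hset]
  apply hemb.isClosedMap
  have : {c : ι → ℝ | ∀ j, 0 ≤ c j} = ⋂ j, {c | 0 ≤ c j} := by ext; simp
  rw [this]
  exact isClosed_iInter fun j => isClosed_le continuous_const (continuous_apply j)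

lemma caratheodory_cone {ι : Type*} [Fintype ι] {E : Type*} [AddCommGroup E] [Module ℝ E]
    (v : ι → E) (s : Finset ι) (c : ι → ℝ)
    (hc : ∀ j, 0 ≤ c j) (hs : ∀ j ∉ s, c j = 0) :
    ∃ (t : Finset ι) (d : ι → ℝ), LinearIndependent ℝ (fun j : t => v j) ∧
      (∀ j, 0 ≤ d j) ∧ (∀ j ∉ t, d j = 0) ∧ ∑ j, d j • v j = ∑ j, c j • v j := by
  classical
  induction s using Finset.strongInduction generalizing c with
  | _ s ih =>
  by_cases hli : LinearIndependent ℝ (fun j : s => v j)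
  · exact ⟨s, c, hli, hc, hs, rfl⟩
  · obtain ⟨g, hg0, i₀, hi₀⟩ := Fintype.not_linearIndependent_iff.mp hli
    have key : ∃ d : ι → ℝ, (∀ j ∉ s, d j = 0) ∧ (∃ j ∈ s, 0 < d j) ∧
        ∑ j, d j • v j = 0 := by
      set d₀ : ι → ℝ := fun j => if h : j ∈ s then g ⟨j, h⟩ else 0 with hd₀
      have hd₀sum : ∑ j, d₀ j • v j = 0 := by
        rw [← Finset.sum_subset (Finset.subset_univ s)
          (fun j _ hj => by simp [hd₀, hj]),
          ← Finset.sum_coe_sort s (fun j => d₀ j • v j), ← hg0]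
        exact Finset.sum_congr rfl fun j _ => by simp [hd₀, j.2]
      rcases lt_or_gt_of_ne hi₀ with h | h
      · refine ⟨-d₀, fun j hj => by simp [hd₀, hj], ⟨i₀, i₀.2, ?_⟩, ?_⟩
        · simp only [Pi.neg_apply, hd₀, i₀.2, dif_pos, Subtype.coe_eta]
          linarith
        · simp only [Pi.neg_apply, neg_smul, Finset.sum_neg_distrib, hd₀sum, neg_zero]
      · refine ⟨d₀, fun j hj => by simp [hd₀, hj], ⟨i₀, i₀.2, ?_⟩, hd₀sum⟩
        simp only [hd₀, i₀.2, dif_pos, Subtype.coe_eta]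
        exact h
    obtain ⟨d, hdout, ⟨jp, hjps, hjp⟩, hdsum⟩ := key
    set T := s.filter (fun j => 0 < d j) with hT
    have hTne : T.Nonempty := ⟨jp, Finset.mem_filter.mpr ⟨hjps, hjp⟩⟩
    obtain ⟨j₀, hj₀T, hmin⟩ := Finset.exists_min_image T (fun j => c j / d j) hTne
    have hj₀s : j₀ ∈ s := (Finset.mem_filter.mp hj₀T).1
    have hdj₀ : 0 < d j₀ := (Finset.mem_filter.mp hj₀T).2
    set r := c j₀ / d j₀ with hr
    have hr0 : 0 ≤ r := div_nonneg (hc j₀) hdj₀.le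
    set c' : ι → ℝ := fun j => c j - r * d j with hc'
    have hc'0 : ∀ j, 0 ≤ c' j := by
      intro j
      by_cases hjT : j ∈ T
      · have hdj : 0 < d j := (Finset.mem_filter.mp hjT).2
        have := hmin j hjT
        simp only [hc', sub_nonneg]
        calc r * d j ≤ (c j / d j) * d j := by nlinarith
          _ = c j := div_mul_cancel₀ _ hdj.ne'
      · by_cases hjs : j ∈ s
        · have hdj : d j ≤ 0 := by
            by_contra h
            exact hjT (Finset.mem_filter.mpr ⟨hjs, lt_of_not_ge h⟩)
          simp only [hc', sub_nonneg]
          nlinarith [hc j]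
        · simp [hc', hdout j hjs, hs j hjs]
    have hc'j₀ : c' j₀ = 0 := by
      simp only [hc', hr]
      field_simp
      ring
    have hc'out : ∀ j ∉ s.erase j₀, c' j = 0 := by
      intro j hj
      by_cases hjj : j = j₀
      · rw [hjj]; exact hc'j₀
      · have hjs : j ∉ s := fun h => hj (Finset.mem_erase.mpr ⟨hjj, h⟩)
        simp [hc', hs j hjs, hdout j hjs]
    have hc'sum : ∑ j, c' j • v j = ∑ j, c j • v j := by
      have hrd : ∑ j, (r * d j) • v j = r • ∑ j, d j • v j := by
        rw [Finset.smul_sum]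
        exact Finset.sum_congr rfl fun j _ => (smul_smul r (d j) (v j)).symm
      calc ∑ j, c' j • v j = ∑ j, (c j • v j - (r * d j) • v j) := by
            simp [hc', sub_smul]
        _ = ∑ j, c j • v j - ∑ j, (r * d j) • v j := Finset.sum_sub_distrib _ _
        _ = ∑ j, c j • v j := by rw [hrd, hdsum, smul_zero, sub_zero]
    obtain ⟨t, d', h1, h2, h3, h4⟩ := ih (s.erase j₀) (Finset.erase_ssubset hj₀s) c' hc'0 hc'out
    exact ⟨t, d', h1, h2, h3, by rw [h4, hc'sum]⟩

lemma isClosed_cone {ι : Type*} [Fintype ι] {E : Type*} [NormedAddCommGroup E]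
    [InnerProductSpace ℝ E] [FiniteDimensional ℝ E] (v : ι → E) :
    IsClosed {x : E | ∃ c : ι → ℝ, (∀ j, 0 ≤ c j) ∧ ∑ j, c j • v j = x} := by
  classical
  have hrepr : {x : E | ∃ c : ι → ℝ, (∀ j, 0 ≤ c j) ∧ ∑ j, c j • v j = x}
      = ⋃ t ∈ {t : Finset ι | LinearIndependent ℝ (fun j : t => v j)},
        {x : E | ∃ c : t → ℝ, (∀ j, 0 ≤ c j) ∧ ∑ j, c j • v (j : ι) = x} := by
    ext x
    simp only [Set.mem_setOf_eq, Set.mem_iUnion]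
    constructor
    · rintro ⟨c, hc, rfl⟩
      obtain ⟨t, d, hli, hd0, hdout, hdsum⟩ := caratheodory_cone v Finset.univ c hc
        (fun j hj => absurd (Finset.mem_univ j) hj)
      refine ⟨t, hli, fun j => d j, fun j => hd0 j, ?_⟩
      rw [← hdsum, Finset.sum_coe_sort t (fun j => d j • v j)]
      exact Finset.sum_subset (Finset.subset_univ t)
        (fun j _ hj => by rw [hdout j hj, zero_smul])
    · rintro ⟨t, hli, c, hc, rfl⟩
      refine ⟨fun j => if h : j ∈ t then c ⟨j, h⟩ else 0, fun j => ?_, ?_⟩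
      · by_cases h : j ∈ t <;> simp [h, hc]
      · rw [← Finset.sum_subset (Finset.subset_univ t) (fun j _ hj => by simp [hj]),
          ← Finset.sum_coe_sort t]
        exact Finset.sum_congr rfl fun j _ => by simp [j.2]
  rw [hrepr]
  refine Set.Finite.isClosed_biUnion (Set.toFinite _) ?_
  intro t ht
  exact isClosed_cone_of_li (fun j : t => v j) ht

lemma farkas_eq {κ ι : Type*} [Fintype κ] [Fintype ι] (B : Matrix κ ι ℝ) (c : κ → ℝ)
    (h : ¬ ∃ x : ι → ℝ, (∀ j, 0 ≤ x j) ∧ B.mulVec x = c) :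
    ∃ y : κ → ℝ, (∀ j, 0 ≤ Matrix.vecMul y B j) ∧ ∑ i, y i * c i < 0 := by
  classical
  set v : ι → EuclideanSpace ℝ κ := fun j => WithLp.toLp 2 (fun i => B i j) with hv
  have hvc : ∀ (x : ι → ℝ), (∑ j, x j • v j) = B.mulVec x := by
    intro x
    funext i
    have : (∑ j, x j • v j) i = ∑ j, x j * B i j := by
      rw [WithLp.ofLp_sum, Finset.sum_apply]
      rfl
    rw [this, Matrix.mulVec, dotProduct]
    exact Finset.sum_congr rfl fun j _ => mul_comm _ _
  set S : Set (EuclideanSpace ℝ κ) :=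
    {x : EuclideanSpace ℝ κ | ∃ d : ι → ℝ, (∀ j, 0 ≤ d j) ∧ ∑ j, d j • v j = x} with hS
  set K : ConvexCone ℝ (EuclideanSpace ℝ κ) :=
    { carrier := S
      smul_mem' := by
        rintro r hr x ⟨d, hd, rfl⟩
        exact ⟨r • d, fun j => mul_nonneg hr.le (hd j), by
          rw [Finset.smul_sum]
          exact Finset.sum_congr rfl fun j _ => by
            simp [smul_smul]⟩
      add_mem' := by
        rintro x ⟨d, hd, rfl⟩ y ⟨e, he, rfl⟩
        exact ⟨d + e, fun j => add_nonneg (hd j) (he j), by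
          rw [← Finset.sum_add_distrib]
          exact Finset.sum_congr rfl fun j _ => by simp [add_smul]⟩ } with hK
  have hne : (K : Set (EuclideanSpace ℝ κ)).Nonempty := ⟨0, ⟨0, fun j => le_refl 0, by simp⟩⟩
  have hcl : IsClosed (K : Set (EuclideanSpace ℝ κ)) := isClosed_cone v
  have hnmem : (WithLp.toLp 2 c : EuclideanSpace ℝ κ) ∉ K := by
    rintro ⟨d, hd, hdc⟩
    exact h ⟨d, hd, by rw [← hvc d]; exact congrArg WithLp.ofLp hdc⟩
  obtain ⟨y, hy1, hy2⟩ :=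
    ProperCone.hyperplane_separation' (C := ({
        carrier := S
        zero_mem' := ⟨0, fun j => le_refl 0, by simp⟩
        add_mem' := fun ha hb => K.add_mem' ha hb
        smul_mem' := by
          rintro ⟨r, hr⟩ x ⟨d, hd, rfl⟩
          refine ⟨r • d, fun j => mul_nonneg hr (hd j), ?_⟩
          show _ = (r : ℝ) • ∑ j, d j • v j
          rw [Finset.smul_sum]
          exact Finset.sum_congr rfl fun j _ => by simp [smul_smul]
        isClosed' := hcl } : ProperCone ℝ (EuclideanSpace ℝ κ))) hnmem
  refine ⟨y, fun j => ?_, ?_⟩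
  · have hvj : v j ∈ K := ⟨Pi.single j 1, by
      intro k
      by_cases hk : k = j <;> simp [Pi.single_apply, hk], by
      simp [Pi.single_apply]⟩
    have := hy1 (v j) hvj
    rw [Matrix.vecMul, dotProduct]
    simpa [PiLp.inner_apply, RCLike.inner_apply, conj_trivial, hv, mul_comm] using this
  · simpa [PiLp.inner_apply, RCLike.inner_apply, conj_trivial, mul_comm] using hy2

lemma farkas_ineq {κ ι : Type*} [Fintype κ] [Fintype ι] [DecidableEq κ]
    (A : Matrix κ ι ℝ) (c : κ → ℝ)
    (h : ¬ ∃ x : ι → ℝ, (∀ j, 0 ≤ x j) ∧ ∀ i, A.mulVec x i ≤ c i) :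
    ∃ y : κ → ℝ, (∀ i, 0 ≤ y i) ∧ (∀ j, 0 ≤ Matrix.vecMul y A j) ∧ ∑ i, y i * c i < 0 := by
  set B := Matrix.fromCols A (1 : Matrix κ κ ℝ) with hB
  have hfeas : ¬ ∃ z : ι ⊕ κ → ℝ, (∀ j, 0 ≤ z j) ∧ B.mulVec z = c := by
    rintro ⟨z, hz, hzc⟩
    apply h
    refine ⟨z ∘ Sum.inl, fun j => hz (Sum.inl j), fun i => ?_⟩
    have : B.mulVec z = A.mulVec (z ∘ Sum.inl) + (1 : Matrix κ κ ℝ).mulVec (z ∘ Sum.inr) := by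
      have hz' : z = Sum.elim (z ∘ Sum.inl) (z ∘ Sum.inr) := by
        funext j; cases j <;> rfl
      rw [hB]
      conv_lhs => rw [hz']
      rw [Matrix.fromCols_mulVec_sumElim]
    rw [this] at hzc
    have := congrFun hzc i
    simp only [Pi.add_apply, Matrix.one_mulVec] at this
    have h0 := hz (Sum.inr i)
    simp only [Function.comp_apply] at this
    linarith
  obtain ⟨y, hy1, hy2⟩ := farkas_eq B c hfeas
  refine ⟨y, fun i => ?_, fun j => ?_, hy2⟩
  · have := hy1 (Sum.inr i)
    rwa [hB, Matrix.vecMul_fromCols, Sum.elim_inr, Matrix.vecMul_one] at this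
  · have := hy1 (Sum.inl j)
    rwa [hB, Matrix.vecMul_fromCols, Sum.elim_inl] at this

end FarkasAux

/-- Variant of Farkas' lemma: exactly one of the two alternatives holds. -/
theorem farkas_variant {m₁ m₂ n : ℕ}
    (M : Matrix (Fin m₁) (Fin n) ℝ) (N : Matrix (Fin m₂) (Fin n) ℝ)
    (a : Fin m₁ → ℝ) (b : Fin m₂ → ℝ) :
    Xor'
      (∃ x : Fin n → ℝ, (∀ j, 0 ≤ x j) ∧ (∀ i, M.mulVec x i ≤ a i) ∧
        (∀ i, N.mulVec x i < b i))
      (∃ (lam : Fin m₁ → ℝ) (mu : Fin m₂ → ℝ),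
        (∀ i, 0 ≤ lam i) ∧ (∀ i, 0 ≤ mu i) ∧
        (∀ j, 0 ≤ Matrix.vecMul lam M j + Matrix.vecMul mu N j) ∧
        (∑ i, lam i * a i + ∑ i, mu i * b i ≤ 0) ∧
        (∑ i, lam i * a i + ∑ i, mu i * b i < 0 ∨ mu ≠ 0)) := by
  classical
  by_cases hP : (∃ x : Fin n → ℝ, (∀ j, 0 ≤ x j) ∧ (∀ i, M.mulVec x i ≤ a i) ∧
      (∀ i, N.mulVec x i < b i))
  · -- exclusion: both cannot hold
    refine Or.inl ⟨hP, ?_⟩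
    rintro ⟨lam, mu, hlam, hmu, hpos, hsum, hlast⟩
    obtain ⟨x, hx0, hxM, hxN⟩ := hP
    have h1 : (0:ℝ) ≤ ∑ j, (Matrix.vecMul lam M j + Matrix.vecMul mu N j) * x j :=
      Finset.sum_nonneg fun j _ => mul_nonneg (hpos j) (hx0 j)
    have e1 : ∑ i, lam i * M.mulVec x i = ∑ j, Matrix.vecMul lam M j * x j := by
      simpa [dotProduct] using dotProduct_mulVec lam M x
    have e2 : ∑ i, mu i * N.mulVec x i = ∑ j, Matrix.vecMul mu N j * x j := by
      simpa [dotProduct] using dotProduct_mulVec mu N x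
    have h2 : ∑ j, (Matrix.vecMul lam M j + Matrix.vecMul mu N j) * x j
        = ∑ i, lam i * M.mulVec x i + ∑ i, mu i * N.mulVec x i := by
      rw [e1, e2, ← Finset.sum_add_distrib]
      exact Finset.sum_congr rfl fun j _ => (add_mul _ _ _)
    have h3 : ∑ i, lam i * M.mulVec x i ≤ ∑ i, lam i * a i :=
      Finset.sum_le_sum fun i _ => mul_le_mul_of_nonneg_left (hxM i) (hlam i)
    have h4 : ∑ i, mu i * N.mulVec x i ≤ ∑ i, mu i * b i :=
      Finset.sum_le_sum fun i _ => mul_le_mul_of_nonneg_left (hxN i).le (hmu i)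
    rcases hlast with hlt | hne
    · linarith
    · obtain ⟨i₀, hi₀⟩ := Function.ne_iff.mp hne
      have hi₀pos : 0 < mu i₀ := lt_of_le_of_ne (hmu i₀) (Ne.symm hi₀)
      have h4' : ∑ i, mu i * N.mulVec x i < ∑ i, mu i * b i :=
        Finset.sum_lt_sum
          (fun i _ => mul_le_mul_of_nonneg_left (hxN i).le (hmu i))
          ⟨i₀, Finset.mem_univ _, mul_lt_mul_of_pos_left (hxN i₀) hi₀pos⟩
      linarith
  · refine Or.inr ⟨?_, hP⟩
    -- construct the certificate from infeasibility of the extended system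
    set A' : Matrix ((Fin m₁ ⊕ Fin m₂) ⊕ Bool) (Fin n ⊕ Bool) ℝ :=
      Sum.elim
        (Sum.elim (fun i => Sum.elim (M i) (fun t => cond t 0 (-a i)))
                  (fun i => Sum.elim (N i) (fun t => cond t 1 (-b i))))
        (fun r => Sum.elim (fun _ => 0)
          (fun t => cond t (cond r (-1) 0) (cond r 0 (-1)))) with hA'
    set c' : (Fin m₁ ⊕ Fin m₂) ⊕ Bool → ℝ := Sum.elim (fun _ => 0) (fun _ => -1) with hc'
    -- mulVec computations
    have hmv1 : ∀ (z : Fin n ⊕ Bool → ℝ) (i : Fin m₁),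
        A'.mulVec z (Sum.inl (Sum.inl i)) =
          M.mulVec (z ∘ Sum.inl) i - a i * z (Sum.inr false) := by
      intro z i
      simp only [hA', Matrix.mulVec, dotProduct, Fintype.sum_sum_type, Fintype.sum_bool,
        Sum.elim_inl, Sum.elim_inr, Function.comp_apply, cond_true, cond_false]
      ring
    have hmv2 : ∀ (z : Fin n ⊕ Bool → ℝ) (i : Fin m₂),
        A'.mulVec z (Sum.inl (Sum.inr i)) =
          N.mulVec (z ∘ Sum.inl) i - b i * z (Sum.inr false) + z (Sum.inr true) := by
      intro z i
      simp only [hA', Matrix.mulVec, dotProduct, Fintype.sum_sum_type, Fintype.sum_bool,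
        Sum.elim_inl, Sum.elim_inr, Function.comp_apply, cond_true, cond_false]
      ring
    have hmv3 : ∀ (z : Fin n ⊕ Bool → ℝ),
        A'.mulVec z (Sum.inr false) = -z (Sum.inr false) := by
      intro z
      simp only [hA', Matrix.mulVec, dotProduct, Fintype.sum_sum_type, Fintype.sum_bool,
        Sum.elim_inl, Sum.elim_inr, cond_true, cond_false]
      simp
    have hmv4 : ∀ (z : Fin n ⊕ Bool → ℝ),
        A'.mulVec z (Sum.inr true) = -z (Sum.inr true) := by
      intro z
      simp only [hA', Matrix.mulVec, dotProduct, Fintype.sum_sum_type, Fintype.sum_bool,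
        Sum.elim_inl, Sum.elim_inr, cond_true, cond_false]
      simp
    -- the extended system is infeasible
    have hinfeas : ¬ ∃ z : Fin n ⊕ Bool → ℝ, (∀ j, 0 ≤ z j) ∧ ∀ k, A'.mulVec z k ≤ c' k := by
      rintro ⟨z, hz0, hzle⟩
      apply hP
      set x := z ∘ Sum.inl with hx
      set s := z (Sum.inr false) with hs
      set ε := z (Sum.inr true) with hε
      have hs1 : 1 ≤ s := by
        have := hzle (Sum.inr false)
        rw [hmv3] at this
        simp only [hc', Sum.elim_inr] at this
        linarith
      have hε1 : 1 ≤ ε := by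
        have := hzle (Sum.inr true)
        rw [hmv4] at this
        simp only [hc', Sum.elim_inr] at this
        linarith
      have hspos : 0 < s := by linarith
      refine ⟨s⁻¹ • x, fun j => mul_nonneg (inv_nonneg.mpr hspos.le) (hz0 _), fun i => ?_, fun i => ?_⟩
      · have hle := hzle (Sum.inl (Sum.inl i))
        rw [hmv1] at hle
        simp only [hc', Sum.elim_inl] at hle
        rw [Matrix.mulVec_smul]
        have hMx : M.mulVec x i ≤ a i * s := by linarith
        have h1 : (s⁻¹ • M.mulVec x) i = s⁻¹ * M.mulVec x i := rfl
        rw [h1]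
        have hss : s⁻¹ * s = 1 := inv_mul_cancel₀ hspos.ne'
        have h2 : s⁻¹ * (a i * s) = a i * (s⁻¹ * s) := by ring
        rw [hss, mul_one] at h2
        linarith [mul_le_mul_of_nonneg_left hMx (inv_nonneg.mpr hspos.le)]
      · have hle := hzle (Sum.inl (Sum.inr i))
        rw [hmv2] at hle
        simp only [hc', Sum.elim_inl] at hle
        rw [Matrix.mulVec_smul]
        have hNx : N.mulVec x i ≤ b i * s - ε := by linarith
        have h1 : (s⁻¹ • N.mulVec x) i = s⁻¹ * N.mulVec x i := rfl
        rw [h1]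
        have hεpos : 0 < ε := by linarith
        have hss : s⁻¹ * s = 1 := inv_mul_cancel₀ hspos.ne'
        have h2 : s⁻¹ * (b i * s - ε) = b i * (s⁻¹ * s) - s⁻¹ * ε := by ring
        rw [hss, mul_one] at h2
        linarith [mul_le_mul_of_nonneg_left hNx (inv_nonneg.mpr hspos.le),
          mul_pos (inv_pos.mpr hspos) hεpos]
    obtain ⟨y, hy0, hy1, hy2⟩ := farkas_ineq A' c' hinfeas
    -- vecMul computations
    have hvm1 : ∀ j : Fin n, Matrix.vecMul y A' (Sum.inl j) =
        Matrix.vecMul (fun i => y (Sum.inl (Sum.inl i))) M j +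
        Matrix.vecMul (fun i => y (Sum.inl (Sum.inr i))) N j := by
      intro j
      simp only [hA', Matrix.vecMul, dotProduct, Fintype.sum_sum_type, Fintype.sum_bool,
        Sum.elim_inl, Sum.elim_inr, cond_true, cond_false, mul_zero, add_zero, mul_one, zero_add]
    have hvm2 : Matrix.vecMul y A' (Sum.inr false) =
        -∑ i, y (Sum.inl (Sum.inl i)) * a i - ∑ i, y (Sum.inl (Sum.inr i)) * b i
          - y (Sum.inr false) := by
      simp only [hA', Matrix.vecMul, dotProduct, Fintype.sum_sum_type, Fintype.sum_bool,
        Sum.elim_inl, Sum.elim_inr, cond_true, cond_false, mul_zero, add_zero, mul_one, zero_add,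
        mul_neg, Finset.sum_neg_distrib]
      ring
    have hvm3 : Matrix.vecMul y A' (Sum.inr true) =
        (∑ i, y (Sum.inl (Sum.inr i))) - y (Sum.inr true) := by
      simp only [hA', Matrix.vecMul, dotProduct, Fintype.sum_sum_type, Fintype.sum_bool,
        Sum.elim_inl, Sum.elim_inr, cond_true, cond_false, mul_zero, add_zero, mul_one, zero_add,
        mul_neg, Finset.sum_neg_distrib, Finset.sum_const_zero]
      ring
    have hvc : ∑ k, y k * c' k = -y (Sum.inr false) - y (Sum.inr true) := by
      simp only [hc', Fintype.sum_sum_type, Fintype.sum_bool, Sum.elim_inl, Sum.elim_inr,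
        mul_zero, mul_neg, mul_one, Finset.sum_const_zero, zero_add]
      ring
    have hα : 0 ≤ y (Sum.inr false) := hy0 _
    have hβ : 0 ≤ y (Sum.inr true) := hy0 _
    have hsumle : ∑ i, y (Sum.inl (Sum.inl i)) * a i + ∑ i, y (Sum.inl (Sum.inr i)) * b i
        ≤ -y (Sum.inr false) := by
      have := hy1 (Sum.inr false)
      rw [hvm2] at this
      linarith
    have hmusum : y (Sum.inr true) ≤ ∑ i, y (Sum.inl (Sum.inr i)) := by
      have := hy1 (Sum.inr true)
      rw [hvm3] at this
      linarith
    have hαβ : 0 < y (Sum.inr false) + y (Sum.inr true) := by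
      rw [hvc] at hy2
      linarith
    refine ⟨fun i => y (Sum.inl (Sum.inl i)), fun i => y (Sum.inl (Sum.inr i)),
      fun i => hy0 _, fun i => hy0 _, fun j => ?_, ?_, ?_⟩
    · have := hy1 (Sum.inl j)
      rw [hvm1] at this
      exact this
    · show ∑ i, y (Sum.inl (Sum.inl i)) * a i + ∑ i, y (Sum.inl (Sum.inr i)) * b i ≤ 0
      linarith
    · by_cases hαpos : 0 < y (Sum.inr false)
      · left
        show ∑ i, y (Sum.inl (Sum.inl i)) * a i + ∑ i, y (Sum.inl (Sum.inr i)) * b i < 0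
        linarith
      · right
        have hβpos : 0 < y (Sum.inr true) := by
          push_neg at hαpos
          linarith
        intro h0
        have : ∑ i, y (Sum.inl (Sum.inr i)) = 0 := by
          rw [show (fun i => y (Sum.inl (Sum.inr i))) = (fun i : Fin m₂ => (0:ℝ)) from h0]
          simp
        linarith
end

section
/- If the Farkas alternative (ii) holds with integer data, it holds with integer multipliers: given integer matrices M ∈ ℤ^{m₁×n}, N ∈ ℤ^{m₂×n} and integer vectors a, b, if there exist real λ ≥ 0, μ ≥ 0 with λᵀM + μᵀN ≥ 0, λᵀa + μᵀb ≤ 0, and (λᵀa + μᵀb < 0 or μ ≠ 0), then there exist nonnegative integer vectors λ', μ' satisfying the same conditions. -/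
/-- There is a ℚ-linear functional ℝ → ℚ that approximates the identity on any
finite family of reals. -/
lemma exists_rat_linear_approx {ι : Type*} [Fintype ι] (f : ι → ℝ) (ε : ℝ) (hε : 0 < ε) :
    ∃ Ψ : ℝ →ₗ[ℚ] ℚ, ∀ i, |((Ψ (f i) : ℚ) : ℝ) - f i| < ε := by
  set V : Submodule ℚ ℝ := Submodule.span ℚ (Set.range f) with hV
  have hfin : FiniteDimensional ℚ V := FiniteDimensional.span_of_finite ℚ (Set.finite_range f)
  set d := Module.finrank ℚ V with hd
  let b : Module.Basis (Fin d) ℚ V := Module.finBasis ℚ V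
  obtain ⟨W, hW⟩ := Submodule.exists_isCompl V
  let proj : ℝ →ₗ[ℚ] V := Submodule.linearProjOfIsCompl V W hW
  have hmem : ∀ i, f i ∈ V := fun i => Submodule.subset_span ⟨i, rfl⟩
  -- coordinates of f i
  let c : ι → Fin d → ℚ := fun i s => b.equivFun ⟨f i, hmem i⟩ s
  have hrepr : ∀ i, f i = ∑ s, (c i s : ℝ) * ((b s : ℝ)) := by
    intro i
    have h1 := b.sum_equivFun ⟨f i, hmem i⟩
    have h2 : f i = ((∑ s, b.equivFun ⟨f i, hmem i⟩ s • b s : V) : ℝ) := by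
      rw [h1]
    rw [h2]
    push_cast [Submodule.coe_sum, SetLike.val_smul, Rat.smul_def]
    rfl
  -- choose the closeness for the basis elements
  set C : ℝ := ∑ i, ∑ s, |(c i s : ℝ)| with hC
  have hC0 : 0 ≤ C := Finset.sum_nonneg fun i _ => Finset.sum_nonneg fun s _ => abs_nonneg _
  set δ : ℝ := ε / (C + 1) with hδdef
  have hδ : 0 < δ := div_pos hε (by linarith)
  have hr : ∀ s : Fin d, ∃ q : ℚ, |(q : ℝ) - (b s : ℝ)| < δ := by
    intro s
    obtain ⟨q, hq⟩ := exists_rat_near ((b s : ℝ)) hδ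
    exact ⟨q, by simpa [abs_sub_comm] using hq⟩
  choose r hrq using hr
  refine ⟨(b.constr ℚ r).comp proj, fun i => ?_⟩
  have hproj : proj (f i) = ⟨f i, hmem i⟩ :=
    Submodule.linearProjOfIsCompl_apply_left hW ⟨f i, hmem i⟩
  have happ : ((b.constr ℚ r).comp proj) (f i) = ∑ s, c i s * r s := by
    rw [LinearMap.comp_apply, hproj, Module.Basis.constr_apply_fintype]
    simp [c, smul_eq_mul]
  rw [happ]
  have hdiff : ((∑ s, c i s * r s : ℚ) : ℝ) - f i
      = ∑ s, (c i s : ℝ) * ((r s : ℝ) - (b s : ℝ)) := by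
    rw [hrepr i]
    push_cast
    rw [← Finset.sum_sub_distrib]
    exact Finset.sum_congr rfl fun s _ => by ring
  rw [hdiff]
  calc |∑ s, (c i s : ℝ) * ((r s : ℝ) - (b s : ℝ))|
      ≤ ∑ s, |(c i s : ℝ)| * |(r s : ℝ) - (b s : ℝ)| := by
        refine (Finset.abs_sum_le_sum_abs _ _).trans ?_
        exact le_of_eq (Finset.sum_congr rfl fun s _ => abs_mul _ _)
    _ ≤ ∑ s, |(c i s : ℝ)| * δ := by
        refine Finset.sum_le_sum fun s _ => ?_
        exact mul_le_mul_of_nonneg_left (le_of_lt (hrq s)) (abs_nonneg _)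
    _ = (∑ s, |(c i s : ℝ)|) * δ := by rw [Finset.sum_mul]
    _ ≤ C * δ := by
        refine mul_le_mul_of_nonneg_right ?_ hδ.le
        rw [hC]
        exact Finset.single_le_sum (f := fun i => ∑ s, |(c i s : ℝ)|)
          (fun j _ => Finset.sum_nonneg fun s _ => abs_nonneg _) (Finset.mem_univ i)
    _ < ε := by
        rw [hδdef, ← mul_div_assoc, div_lt_iff₀ (by linarith : (0:ℝ) < C + 1)]
        nlinarith

/-- Given a real vector `f` and finitely many rational linear functionals, there is a
rational vector `g` on which every functional that is positive (resp. zero) at `f`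
is positive (resp. zero) at `g`. -/
lemma exists_rat_solution {ι κ : Type*} [Fintype ι] [Fintype κ] (f : ι → ℝ) (c : κ → ι → ℚ) :
    ∃ g : ι → ℚ,
      (∀ k, 0 < ∑ i, (c k i : ℝ) * f i → 0 < ∑ i, c k i * g i) ∧
      (∀ k, ∑ i, (c k i : ℝ) * f i = 0 → ∑ i, c k i * g i = 0) := by
  set v : κ → ℝ := fun k => ∑ i, (c k i : ℝ) * f i with hv
  set S : κ → ℝ := fun k => ∑ i, |(c k i : ℝ)| with hS
  have hS0 : ∀ k, 0 ≤ S k := fun k => Finset.sum_nonneg fun i _ => abs_nonneg _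
  -- choose ε
  set T : Finset ℝ :=
    insert 1 ((Finset.univ.filter (fun k => 0 < v k)).image (fun k => v k / (S k + 1))) with hT
  have hTne : T.Nonempty := ⟨1, Finset.mem_insert_self _ _⟩
  set ε : ℝ := T.min' hTne with hε'
  have hεmem := T.min'_mem hTne
  have hεpos : 0 < ε := by
    have : ∀ x ∈ T, 0 < x := by
      intro x hx
      rw [hT, Finset.mem_insert] at hx
      rcases hx with rfl | hx
      · norm_num
      · obtain ⟨k, hk, rfl⟩ := Finset.mem_image.mp hx
        have hk' := (Finset.mem_filter.mp hk).2
        exact div_pos hk' (by linarith [hS0 k])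
    exact this ε hεmem
  have hεle : ∀ k, 0 < v k → ε ≤ v k / (S k + 1) := by
    intro k hk
    refine Finset.min'_le _ _ ?_
    rw [hT]
    exact Finset.mem_insert_of_mem (Finset.mem_image.mpr
      ⟨k, Finset.mem_filter.mpr ⟨Finset.mem_univ k, hk⟩, rfl⟩)
  obtain ⟨Ψ, hΨ⟩ := exists_rat_linear_approx f ε hεpos
  refine ⟨fun i => Ψ (f i), ?_, ?_⟩
  · intro k hk
    have hbound : |((∑ i, c k i * Ψ (f i) : ℚ) : ℝ) - v k| ≤ S k * ε := by
      have heq : ((∑ i, c k i * Ψ (f i) : ℚ) : ℝ) - v k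
          = ∑ i, (c k i : ℝ) * (((Ψ (f i) : ℚ) : ℝ) - f i) := by
        rw [hv]
        push_cast
        rw [← Finset.sum_sub_distrib]
        exact Finset.sum_congr rfl fun i _ => by ring
      rw [heq, hS, Finset.sum_mul]
      refine (Finset.abs_sum_le_sum_abs _ _).trans (Finset.sum_le_sum fun i _ => ?_)
      rw [abs_mul]
      exact mul_le_mul_of_nonneg_left (hΨ i).le (abs_nonneg _)
    have hlt : S k * ε < v k := by
      have h1 := hεle k hk
      have h2 : S k * ε ≤ S k * (v k / (S k + 1)) :=
        mul_le_mul_of_nonneg_left h1 (hS0 k)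
      have h3 : S k * (v k / (S k + 1)) < v k := by
        rw [mul_div_assoc', div_lt_iff₀ (by linarith [hS0 k] : (0:ℝ) < S k + 1)]
        nlinarith [hS0 k]
      linarith
    have : 0 < ((∑ i, c k i * Ψ (f i) : ℚ) : ℝ) := by
      have := abs_sub_lt_iff.mp (lt_of_le_of_lt hbound hlt)
      linarith [this.2]
    exact_mod_cast this
  · intro k hk
    have hlin : (∑ i, c k i * Ψ (f i)) = Ψ (∑ i, (c k i : ℝ) * f i) := by
      rw [map_sum]
      refine Finset.sum_congr rfl fun i _ => ?_
      rw [show (c k i : ℝ) * f i = c k i • f i from (Rat.smul_def _ _).symm, map_smul,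
        smul_eq_mul]
    rw [hlin, hv] at *
    rw [hk, map_zero]

/-- Clear denominators: nonnegative rationals can be scaled to naturals. -/
lemma exists_nat_scale {ι : Type*} [Fintype ι] (q : ι → ℚ) (hq : ∀ i, 0 ≤ q i) :
    ∃ (d : ℕ) (g : ι → ℕ), 0 < d ∧ ∀ i, (g i : ℚ) = d * q i := by
  refine ⟨∏ i, (q i).den, fun i => ((∏ j, (q j).den : ℕ) / (q i).den * (q i).num.toNat), ?_, ?_⟩
  · exact Finset.prod_pos fun i _ => (q i).pos
  · intro i
    have hdvd : (q i).den ∣ ∏ j, (q j).den := Finset.dvd_prod_of_mem _ (Finset.mem_univ i)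
    obtain ⟨k, hk⟩ := hdvd
    have hknum : (((∏ j, (q j).den : ℕ) / (q i).den) : ℕ) = k := by
      rw [hk, Nat.mul_div_cancel_left _ (q i).pos]
    show ((((∏ j, (q j).den : ℕ) / (q i).den) * (q i).num.toNat : ℕ) : ℚ) = _
    rw [hknum]
    have hnum : ((q i).num.toNat : ℚ) = ((q i).num : ℚ) := by
      exact_mod_cast Int.toNat_of_nonneg (Rat.num_nonneg.mpr (hq i))
    push_cast [hnum, hk]
    rw [mul_comm ((q i).den : ℚ) (k:ℚ), mul_assoc]
    congr 1
    rw [mul_comm, Rat.mul_den_eq_num]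

/-- If the second Farkas alternative holds with integer data and real multipliers, it
holds with nonnegative integer multipliers. -/
theorem farkas_integer_multipliers {m₁ m₂ n : ℕ}
    (M : Matrix (Fin m₁) (Fin n) ℤ) (N : Matrix (Fin m₂) (Fin n) ℤ)
    (a : Fin m₁ → ℤ) (b : Fin m₂ → ℤ)
    (h : ∃ (lam : Fin m₁ → ℝ) (mu : Fin m₂ → ℝ),
      (∀ i, 0 ≤ lam i) ∧ (∀ i, 0 ≤ mu i) ∧
      (∀ j, 0 ≤ (∑ i, lam i * (M i j : ℝ)) + ∑ i, mu i * (N i j : ℝ)) ∧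
      ((∑ i, lam i * (a i : ℝ)) + ∑ i, mu i * (b i : ℝ) ≤ 0) ∧
      ((∑ i, lam i * (a i : ℝ)) + ∑ i, mu i * (b i : ℝ) < 0 ∨ mu ≠ 0)) :
    ∃ (lam' : Fin m₁ → ℕ) (mu' : Fin m₂ → ℕ),
      (∀ j, 0 ≤ (∑ i, (lam' i : ℝ) * (M i j : ℝ)) + ∑ i, (mu' i : ℝ) * (N i j : ℝ)) ∧
      ((∑ i, (lam' i : ℝ) * (a i : ℝ)) + ∑ i, (mu' i : ℝ) * (b i : ℝ) ≤ 0) ∧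
      ((∑ i, (lam' i : ℝ) * (a i : ℝ)) + ∑ i, (mu' i : ℝ) * (b i : ℝ) < 0 ∨ mu' ≠ 0) := by
  obtain ⟨lam, mu, hlam, hmu, hcol, hle, hdisj⟩ := h
  set ι := Fin m₁ ⊕ Fin m₂ with hι
  set f : ι → ℝ := Sum.elim lam mu with hf
  set c : (Fin n ⊕ (ι ⊕ Unit)) → ι → ℚ :=
    Sum.elim
      (fun j => Sum.elim (fun i => (M i j : ℚ)) (fun i => (N i j : ℚ)))
      (Sum.elim (fun s i => if i = s then 1 else 0)
        (fun _ => Sum.elim (fun i => -(a i : ℚ)) (fun i => -(b i : ℚ)))) with hc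
  obtain ⟨g, hpos, hzero⟩ := exists_rat_solution f c
  -- value computations (real side)
  have hval1 : ∀ j, ∑ i : ι, (c (.inl j) i : ℝ) * f i
      = (∑ i, lam i * (M i j : ℝ)) + ∑ i, mu i * (N i j : ℝ) := by
    intro j
    rw [Fintype.sum_sum_type]
    push_cast [hc, hf]
    simp [mul_comm]
  have hval2 : ∀ s : ι, ∑ i : ι, (c (.inr (.inl s)) i : ℝ) * f i = f s := by
    intro s
    simp [hc, apply_ite]
  have hval3 : ∑ i : ι, (c (.inr (.inr ())) i : ℝ) * f i
      = -((∑ i, lam i * (a i : ℝ)) + ∑ i, mu i * (b i : ℝ)) := by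
    rw [Fintype.sum_sum_type]
    push_cast [hc, hf]
    simp [mul_comm]
    ring
  -- rational value computations
  have hgval2 : ∀ s : ι, ∑ i : ι, c (.inr (.inl s)) i * g i = g s := by
    intro s
    simp [hc]
  have hgval1 : ∀ j, ∑ i : ι, c (.inl j) i * g i
      = (∑ i, (M i j : ℚ) * g (.inl i)) + ∑ i, (N i j : ℚ) * g (.inr i) := by
    intro j
    rw [Fintype.sum_sum_type]
    simp [hc]
  have hgval3 : ∑ i : ι, c (.inr (.inr ())) i * g i
      = -((∑ i, (a i : ℚ) * g (.inl i)) + ∑ i, (b i : ℚ) * g (.inr i)) := by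
    rw [Fintype.sum_sum_type]
    simp [hc]
    ring
  -- nonnegativity of g
  have hge : ∀ k, 0 ≤ ∑ i : ι, (c k i : ℝ) * f i → 0 ≤ ∑ i : ι, c k i * g i := by
    intro k hk
    rcases eq_or_lt_of_le hk with heq | hlt
    · rw [hzero k heq.symm]
    · exact (hpos k hlt).le
  have hg0 : ∀ s : ι, 0 ≤ g s := by
    intro s
    have := hge (.inr (.inl s)) (by rw [hval2 s]; cases s <;> simp [hf, hlam _, hmu _])
    rwa [hgval2 s] at this
  -- scale to naturals
  obtain ⟨d, gn, hd, hgn⟩ := exists_nat_scale g hg0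
  have hdq : (0:ℚ) < (d:ℚ) := by exact_mod_cast hd
  refine ⟨fun i => gn (.inl i), fun i => gn (.inr i), ?_, ?_, ?_⟩
  · -- columns
    intro j
    have h1 : 0 ≤ ∑ i : ι, c (.inl j) i * g i := hge _ (by rw [hval1 j]; exact hcol j)
    rw [hgval1 j] at h1
    have h2 : (0:ℚ) ≤ (∑ i, (gn (Sum.inl i) : ℚ) * (M i j : ℚ))
        + ∑ i, (gn (Sum.inr i) : ℚ) * (N i j : ℚ) := by
      have e : (∑ i, (gn (Sum.inl i) : ℚ) * (M i j : ℚ))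
          + ∑ i, (gn (Sum.inr i) : ℚ) * (N i j : ℚ)
          = (d:ℚ) * ((∑ i, (M i j : ℚ) * g (.inl i)) + ∑ i, (N i j : ℚ) * g (.inr i)) := by
        simp only [hgn]
        rw [mul_add, Finset.mul_sum, Finset.mul_sum]
        congr 1 <;> exact Finset.sum_congr rfl fun i _ => by ring
      rw [e]
      positivity
    exact_mod_cast h2
  · -- lam' a + mu' b ≤ 0
    have h1 : 0 ≤ ∑ i : ι, c (.inr (.inr ())) i * g i := by
      refine hge _ ?_
      rw [hval3]
      linarith
    rw [hgval3] at h1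
    have h2 : (∑ i, (gn (Sum.inl i) : ℚ) * (a i : ℚ))
        + ∑ i, (gn (Sum.inr i) : ℚ) * (b i : ℚ) ≤ 0 := by
      have e : (∑ i, (gn (Sum.inl i) : ℚ) * (a i : ℚ))
          + ∑ i, (gn (Sum.inr i) : ℚ) * (b i : ℚ)
          = (d:ℚ) * ((∑ i, (a i : ℚ) * g (.inl i)) + ∑ i, (b i : ℚ) * g (.inr i)) := by
        simp only [hgn]
        rw [mul_add, Finset.mul_sum, Finset.mul_sum]
        congr 1 <;> exact Finset.sum_congr rfl fun i _ => by ring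
      rw [e]
      nlinarith
    exact_mod_cast h2
  · -- strict alternative
    rcases hdisj with hstrict | hmune
    · left
      have h1 : 0 < ∑ i : ι, c (.inr (.inr ())) i * g i := by
        refine hpos _ ?_
        rw [hval3]
        linarith
      rw [hgval3] at h1
      have h2 : (∑ i, (gn (Sum.inl i) : ℚ) * (a i : ℚ))
          + ∑ i, (gn (Sum.inr i) : ℚ) * (b i : ℚ) < 0 := by
        have e : (∑ i, (gn (Sum.inl i) : ℚ) * (a i : ℚ))
            + ∑ i, (gn (Sum.inr i) : ℚ) * (b i : ℚ)
            = (d:ℚ) * ((∑ i, (a i : ℚ) * g (.inl i)) + ∑ i, (b i : ℚ) * g (.inr i)) := by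
          simp only [hgn]
          rw [mul_add, Finset.mul_sum, Finset.mul_sum]
          congr 1 <;> exact Finset.sum_congr rfl fun i _ => by ring
        rw [e]
        nlinarith
      exact_mod_cast h2
    · right
      obtain ⟨i₀, hi₀⟩ := Function.ne_iff.mp hmune
      have hpos0 : 0 < mu i₀ := lt_of_le_of_ne (hmu i₀) (Ne.symm hi₀)
      have h1 : 0 < ∑ i : ι, c (.inr (.inl (.inr i₀))) i * g i := by
        refine hpos _ ?_
        rw [hval2]
        simpa [hf] using hpos0
      rw [hgval2] at h1
      have h2 : (0:ℚ) < (gn (Sum.inr i₀) : ℚ) := by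
        rw [hgn]
        positivity
      have h3 : gn (Sum.inr i₀) ≠ 0 := by
        intro hz
        rw [hz] at h2
        simp at h2
      intro hzero'
      exact h3 (congrFun hzero' i₀)
end

section
/- Semantic soundness of the right implication rule: for any interpretation v of Łukasiewicz formulas, if v(Γ, A ⇒ B, Δ) ≤ 0 and v(Γ ⇒ Δ) ≤ 0, then v(Γ ⇒ A→B, Δ) ≤ 0, where v(A→B) = max(v(B) − v(A), 0). -/
/-- Semantic soundness of the right implication rule. -/
theorem imp_right_sound {F : Type*} (v : F → ℝ) (hv : ∀ C, v C ∈ Set.Icc (0:ℝ) 1)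
    (Γ Δ : Multiset F) (A B AB : F)
    (hAB : v AB = max (v B - v A) 0)
    (h₁ : (Multiset.map v (B ::ₘ Δ)).sum - (Multiset.map v (A ::ₘ Γ)).sum ≤ 0)
    (h₂ : (Multiset.map v Δ).sum - (Multiset.map v Γ).sum ≤ 0) :
    (Multiset.map v (AB ::ₘ Δ)).sum - (Multiset.map v Γ).sum ≤ 0 := by
  simp only [Multiset.map_cons, Multiset.sum_cons] at *
  rw [hAB]
  rcases max_cases (v B - v A) 0 with ⟨h, _⟩ | ⟨h, _⟩ <;> rw [h] <;> linarith
end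

section
/- Semantic invertibility of the left implication rule: for any interpretation v of Łukasiewicz formulas, v(Γ, A→B ⇒ Δ) ≤ 0 if and only if min( v(Γ, B ⇒ A, Δ), v(Γ ⇒ Δ) ) ≤ 0, where v(A→B) = max(v(B) − v(A), 0). -/
/-- Semantic invertibility of the left implication rule. -/
theorem imp_left_invertible {F : Type*} (v : F → ℝ) (hv : ∀ C, v C ∈ Set.Icc (0:ℝ) 1)
    (Γ Δ : Multiset F) (A B AB : F)
    (hAB : v AB = max (v B - v A) 0) :
    (Multiset.map v Δ).sum - (Multiset.map v (AB ::ₘ Γ)).sum ≤ 0 ↔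
      min ((Multiset.map v (A ::ₘ Δ)).sum - (Multiset.map v (B ::ₘ Γ)).sum)
          ((Multiset.map v Δ).sum - (Multiset.map v Γ).sum) ≤ 0 := by
  simp only [Multiset.map_cons, Multiset.sum_cons, hAB, min_le_iff]
  rcases le_total (v B - v A) 0 with h | h
  · rw [max_eq_right h]
    constructor
    · intro hle; right; linarith
    · rintro (hle | hle) <;> linarith
  · rw [max_eq_left h]
    constructor
    · intro hle; left; linarith
    · rintro (hle | hle) <;> linarith
end

section
/- Approximate Herbrand theorem (abstract form via compactness): Let P be a set (of 'atomic predicates'), let T be a nonempty set (of 'term tuples'), and for each t ∈ T let G_t : [0,1]^P → ℝ be a continuous function, where [0,1]^P carries the product topology. Let d := sup_{v ∈ [0,1]^P} inf_{t ∈ T} G_t(v), assumed finite, and let ε > 0. Then there exist finitely many t₁, …, t_k ∈ T such that sup_{v ∈ [0,1]^P} min_{1 ≤ i ≤ k} G_{t_i}(v) < d + ε. -/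
/-- Approximate Herbrand theorem (abstract form via compactness). -/
theorem approx_herbrand {P T : Type*} [Nonempty T]
    (G : T → ((P → Set.Icc (0:ℝ) 1) → ℝ))
    (hG : ∀ t, Continuous (G t))
    (hbdd : ∀ v, BddBelow (Set.range fun t => G t v))
    (hbdd' : BddAbove (Set.range fun v => ⨅ t, G t v))
    (ε : ℝ) (hε : 0 < ε) :
    ∃ s : Finset T, s.Nonempty ∧
      (⨆ v : (P → Set.Icc (0:ℝ) 1), ⨅ t : s, G t v) <
        (⨆ v : (P → Set.Icc (0:ℝ) 1), ⨅ t, G t v) + ε := by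
  set d : ℝ := ⨆ v : (P → Set.Icc (0:ℝ) 1), ⨅ t, G t v with hd
  set ε' : ℝ := ε / 2 with hε'
  have hε'pos : 0 < ε' := by positivity
  -- open cover
  have hcover : (Set.univ : Set (P → Set.Icc (0:ℝ) 1)) ⊆
      ⋃ t : T, G t ⁻¹' Set.Iio (d + ε') := by
    intro v _
    have h1 : (⨅ t, G t v) ≤ d := le_ciSup hbdd' v
    have h2 : (⨅ t, G t v) < d + ε' := lt_of_le_of_lt h1 (by linarith)
    obtain ⟨t, ht⟩ := exists_lt_of_ciInf_lt h2
    exact Set.mem_iUnion.2 ⟨t, ht⟩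
  obtain ⟨s, hs⟩ := isCompact_univ.elim_finite_subcover
    (fun t : T => G t ⁻¹' Set.Iio (d + ε')) (fun t => (hG t).isOpen_preimage _ isOpen_Iio) hcover
  have hsne : s.Nonempty := by
    rcases Set.mem_iUnion₂.1 (hs (Set.mem_univ (fun _ => ⟨0, by norm_num, by norm_num⟩)))
      with ⟨t, hts, _⟩
    exact ⟨t, hts⟩
  refine ⟨s, hsne, ?_⟩
  haveI : Nonempty s := hsne.to_subtype
  have hle : (⨆ v : (P → Set.Icc (0:ℝ) 1), ⨅ t : s, G t v) ≤ d + ε' := by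
    apply ciSup_le
    intro v
    rcases Set.mem_iUnion₂.1 (hs (Set.mem_univ v)) with ⟨t, hts, htv⟩
    have hbb : BddBelow (Set.range fun t : s => G t v) := by
      apply (hbdd v).mono
      rintro x ⟨t', rfl⟩
      exact ⟨t', rfl⟩
    exact le_of_lt (lt_of_le_of_lt (ciInf_le hbb (⟨t, hts⟩ : s)) htv)
  linarith
end

section
/- Under the hypotheses of the abstract approximate Herbrand theorem, if additionally sup_{v} inf_{t∈T} G_t(v) ≤ 0 and n ≥ 1, then there exist t₁,…,t_k ∈ T such that for every v ∈ [0,1]^P, min_{1≤i≤k} ( n·G_{t_i}(v) − 1 ) < 0; that is, the 'hypersequent' formed by the 1/n-weakened components at the witnesses t₁,…,t_k is valid. -/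
/-- If moreover sup inf ≤ 0, the 1/n-weakened hypersequent at finitely many Herbrand
witnesses is valid: its minimum component value is negative at every valuation. -/
theorem approx_herbrand_valid {P T : Type*} [Nonempty T]
    (G : T → ((P → Set.Icc (0:ℝ) 1) → ℝ))
    (hG : ∀ t, Continuous (G t))
    (hbdd : ∀ v, BddBelow (Set.range fun t => G t v))
    (hbdd' : BddAbove (Set.range fun v => ⨅ t, G t v))
    (hle : (⨆ v : (P → Set.Icc (0:ℝ) 1), ⨅ t, G t v) ≤ 0)
    (n : ℕ) (hn : 1 ≤ n) :
    ∃ s : Finset T, s.Nonempty ∧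
      ∀ v : (P → Set.Icc (0:ℝ) 1), ∃ t ∈ s, (n : ℝ) * G t v - 1 < 0 := by
  have hnpos : (0:ℝ) < 1 / n := by positivity
  set U : T → Set (P → Set.Icc (0:ℝ) 1) := fun t => {v | G t v < 1 / n} with hU
  have hopen : ∀ t, IsOpen (U t) := fun t => isOpen_lt (hG t) continuous_const
  have hcover : (Set.univ : Set (P → Set.Icc (0:ℝ) 1)) ⊆ ⋃ t, U t := by
    intro v _
    have h1 : (⨅ t, G t v) ≤ 0 :=
      le_trans (le_ciSup hbdd' v) hle
    have h2 : (⨅ t, G t v) < 1 / n := lt_of_le_of_lt h1 hnpos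
    obtain ⟨t, ht⟩ := exists_lt_of_ciInf_lt h2
    exact Set.mem_iUnion.mpr ⟨t, ht⟩
  obtain ⟨s, hs⟩ := isCompact_univ.elim_finite_subcover U hopen hcover
  have v₀ : (P → Set.Icc (0:ℝ) 1) := fun _ => ⟨0, by norm_num⟩
  have hmem : ∀ v : (P → Set.Icc (0:ℝ) 1), ∃ t ∈ s, G t v < 1 / n := by
    intro v
    have := hs (Set.mem_univ v)
    simpa [hU, one_div] using this
  obtain ⟨t₀, ht₀, _⟩ := hmem v₀
  refine ⟨s, ⟨t₀, ht₀⟩, fun v => ?_⟩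
  obtain ⟨t, hts, htv⟩ := hmem v
  refine ⟨t, hts, ?_⟩
  have hn' : (0:ℝ) < n := by exact_mod_cast hn
  rw [sub_neg]
  calc (n:ℝ) * G t v < n * (1/n) := by
        apply mul_lt_mul_of_pos_left htv
        exact hn'
    _ = 1 := by field_simp
end
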